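/- arXiv:1711.11276 — 6 statements merged into one kernel-verified Lean document; each statement's English description precedes it below -/
import Mathlib

section
/- Let x_k = ⟨a_1,...,a_k⟩ and y_k = ⟨a_2,...,a_k⟩ with x_0 = 1, y_0 = 0. Then for 0 ≤ m < n, x_n·y_m − y_n·x_m = (−1)^{m−1}·⟨a_{m+2},...,a_n⟩. -/
def cont {R : Type*} [CommRing R] : List R → R
  | [] => 1
  | [a] => a
  | a :: b :: l => a * cont (b :: l) + cont l

/-- `x k = ⟨a₁,...,a_k⟩`, with `x 0 = 1`. -/
def xc {R : Type*} [CommRing R] (a : ℕ → R) (k : ℕ) : R :=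
  cont (List.map a (List.range' 1 k))

/-- `y k = ⟨a₂,...,a_k⟩`, with `y 0 = 0`. -/
def yc {R : Type*} [CommRing R] (a : ℕ → R) : ℕ → R
  | 0 => 0
  | k + 1 => cont (List.map a (List.range' 2 k))

/-!
The sequences `xₙ` and `yₙ` both satisfy the continuant recurrence
`u (k + 2) = u (k + 1) * a (k + 2) + u k`, hence so does `n ↦ xₙ y_m − yₙ x_m`. The Casoratian of
two solutions only changes sign at each step, so this sequence takes the values `0` and
`(-1) ^ (m + 1)` at `n = m` and `n = m + 1`. The continuants `⟨a_{m+2}, …, a_{m+1+d}⟩` satisfy the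
same recurrence in `d`, and a solution is determined by two consecutive values.
-/

section

variable {R : Type*} [CommRing R]

def SatisfiesContRec (b u : ℕ → R) : Prop :=
  ∀ k, u (k + 2) = u (k + 1) * b k + u k

namespace SatisfiesContRec

variable {b u v : ℕ → R}

theorem mul_const (hu : SatisfiesContRec b u) (c : R) :
    SatisfiesContRec b (fun k => u k * c) := fun k => by
  simp only [hu k]; ring

theorem sub (hu : SatisfiesContRec b u) (hv : SatisfiesContRec b v) :
    SatisfiesContRec b (fun k => u k - v k) := fun k => by
  simp only [hu k, hv k]; ring

theorem comp_add (hu : SatisfiesContRec b u) (j : ℕ) :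
    SatisfiesContRec (fun k => b (j + k)) (fun k => u (j + k)) := fun k => hu (j + k)

theorem casoratian (hu : SatisfiesContRec b u) (hv : SatisfiesContRec b v) (k : ℕ) :
    u (k + 1) * v k - v (k + 1) * u k = (-1) ^ k * (u 1 * v 0 - v 1 * u 0) := by
  induction k with
  | zero => simp
  | succ k ih =>
    rw [hu k, hv k, pow_succ, mul_comm _ (-1 : R), mul_assoc, ← ih]
    ring

theorem eq_of_apply_zero_of_apply_one (hu : SatisfiesContRec b u) (hv : SatisfiesContRec b v)
    (h₀ : u 0 = v 0) (h₁ : u 1 = v 1) : u = v := by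
  have key : ∀ k, u k = v k ∧ u (k + 1) = v (k + 1) := by
    intro k
    induction k with
    | zero => exact ⟨h₀, h₁⟩
    | succ k ih => exact ⟨ih.2, by rw [hu k, hv k, ih.1, ih.2]⟩
  exact funext fun k => (key k).1

end SatisfiesContRec

theorem cont_append_pair :
    ∀ (l : List R) (b c : R), cont (l ++ [b, c]) = cont (l ++ [b]) * c + cont l
  | [], b, c => by simp [cont]
  | [a], b, c => by simp [cont]; ring
  | a :: a' :: l, b, c => by
    simp only [List.cons_append, cont]
    rw [← List.cons_append, ← List.cons_append, cont_append_pair (a' :: l) b c,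
      cont_append_pair l b c]
    ring

theorem satisfiesContRec_cont_range' (a : ℕ → R) (s : ℕ) :
    SatisfiesContRec (fun k => a (s + k + 1)) (fun k => cont ((List.range' s k).map a)) :=
  fun k => by
  have h₁ : List.range' s (k + 1) = List.range' s k ++ [s + k] := List.range'_1_concat
  have h₂ : List.range' s (k + 2) = List.range' s k ++ [s + k, s + k + 1] := by
    rw [List.range'_1_concat, h₁, List.append_assoc, List.singleton_append]; rfl
  simp only [h₁, h₂, List.map_append, List.map_cons, List.map_nil, cont_append_pair]

theorem satisfiesContRec_xc (a : ℕ → R) : SatisfiesContRec (fun k => a (k + 2)) (xc a) :=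
  fun k => by
  have h := satisfiesContRec_cont_range' a 1 k
  dsimp only at h
  rw [add_comm 1 k] at h
  exact h

theorem satisfiesContRec_yc (a : ℕ → R) : SatisfiesContRec (fun k => a (k + 2)) (yc a)
  | 0 => by simp [yc, cont]
  | k + 1 => by
    have h := satisfiesContRec_cont_range' a 2 k
    dsimp only at h
    rw [add_comm 2 k] at h
    exact h

theorem xc_succ_mul_yc_sub_yc_succ_mul_xc (a : ℕ → R) (m : ℕ) :
    xc a (m + 1) * yc a m - yc a (m + 1) * xc a m = (-1) ^ (m + 1) := by
  rw [(satisfiesContRec_xc a).casoratian (satisfiesContRec_yc a)]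
  simp [xc, yc, cont, pow_succ]

theorem xc_add_mul_yc_sub_yc_add_mul_xc (a : ℕ → R) (m d : ℕ) :
    xc a (m + 1 + d) * yc a m - yc a (m + 1 + d) * xc a m
      = (-1) ^ (m + 1) * cont ((List.range' (m + 2) d).map a) := by
  have hD := (((satisfiesContRec_xc a).mul_const (yc a m)).sub
    ((satisfiesContRec_yc a).mul_const (xc a m))).comp_add (m + 1)
  have hC := (satisfiesContRec_cont_range' a (m + 2)).mul_const ((-1 : R) ^ (m + 1))
  simp only [show ∀ k, m + 2 + k + 1 = m + 1 + k + 2 by omega] at hC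
  have hdet := xc_succ_mul_yc_sub_yc_succ_mul_xc a m
  rw [mul_comm ((-1 : R) ^ _)]
  refine congrFun (hD.eq_of_apply_zero_of_apply_one hC ?_ ?_) d
  · simpa [cont, mul_comm] using hdet
  · simp only [List.range'_one, List.map_singleton, cont]
    rw [satisfiesContRec_xc a m, satisfiesContRec_yc a m]
    linear_combination a (m + 2) * hdet

end

/-- For `0 ≤ m < n`, `xₙ·y_m − yₙ·x_m = (−1)^{m−1}·⟨a_{m+2},...,aₙ⟩`.
(The sign `(−1)^{m−1}` is written `(−1)^{m+1}`, which is the same element.) -/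
theorem convergents_det_general {R : Type*} [CommRing R] (a : ℕ → R) (m n : ℕ)
    (hmn : m < n) :
    xc a n * yc a m - yc a n * xc a m
      = (-1 : R) ^ (m + 1) * cont (List.map a (List.range' (m + 2) (n - m - 1))) := by
  obtain ⟨d, rfl⟩ : ∃ d, n = m + 1 + d := ⟨n - (m + 1), by omega⟩
  rw [show m + 1 + d - m - 1 = d by omega]
  exact xc_add_mul_yc_sub_yc_add_mul_xc a m d
end

section
/- Let y be an invertible element of a commutative ring and W = w_1,...,w_n a finite sequence. Define y·W = y·w_1, y^{-1}·w_2, y·w_3, ..., y^{(-1)^{n-1}}·w_n. Then ⟨y·W⟩ = ⟨W⟩ if n is even, and ⟨y·W⟩ = y·⟨W⟩ if n is odd. -/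
/-- The twisted sequence `y·W = y·w₁, y⁻¹·w₂, y·w₃, ...` :
its `i`-th term (for `1 ≤ i ≤ n`) is `y^{(-1)^{i-1}}·w_i`. -/
def twist {R : Type*} [CommRing R] (y : Rˣ) (w : ℕ → R) (i : ℕ) : R :=
  if Odd i then (y : R) * w i else ((y⁻¹ : Rˣ) : R) * w i

lemma aux_twist {R : Type*} [CommRing R] (y : Rˣ) (w : ℕ → R) :
    ∀ n s, cont (List.map (twist y w) (List.range' s n)) =
      (if Even n then 1 else if Odd s then (y : R) else ((y⁻¹ : Rˣ) : R)) *
        cont (List.map w (List.range' s n))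
  | 0, s => by simp [cont]
  | 1, s => by
      by_cases h : Odd s <;> simp [cont, twist, List.range', h]
  | (n+2), s => by
      have h1 := aux_twist y w (n+1) (s+1)
      have h2 := aux_twist y w n (s+2)
      have hr : List.range' s (n+2) = s :: (s+1) :: List.range' (s+2) n := by
        simp [List.range']
      have hr1 : List.range' (s+1) (n+1) = (s+1) :: List.range' (s+2) n := by
        simp [List.range']
      rw [hr1] at h1
      rw [hr]
      simp only [List.map_cons, cont] at *
      have hs1 : Odd (s+1) ↔ ¬ Odd s := by simp [Nat.odd_add_one]
      have hs2 : Odd (s+2) ↔ Odd s := by simp [Nat.odd_add]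
      have hn1 : Even (n+1) ↔ ¬ Even n := Nat.even_add_one
      have hn2 : Even (n+2) ↔ Even n := by simp [Nat.even_add]
      rw [h1, h2, twist]
      have hy : (y : R) * ((y⁻¹ : Rˣ) : R) = 1 := Units.mul_inv y
      have hy' : ((y⁻¹ : Rˣ) : R) * (y : R) = 1 := Units.inv_mul y
      by_cases hs : Odd s <;> by_cases hn : Even n <;>
        simp only [hs, hn, hs1, hs2, hn1, hn2, if_true, if_false, not_true, not_false_iff,
          ite_true, ite_false, one_mul] <;>
        (first
          | ring1
          | linear_combination (w s * cont (w (s+1) :: List.map w (List.range' (s+2) n))) * hy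
          | linear_combination (w s * cont (w (s+1) :: List.map w (List.range' (s+2) n))) * hy'
          | linear_combination (w s * cont (w (s+1) :: List.map w (List.range' (s+2) n)) +
              cont (List.map w (List.range' (s+2) n))) * hy
          | linear_combination (w s * cont (w (s+1) :: List.map w (List.range' (s+2) n)) +
              cont (List.map w (List.range' (s+2) n))) * hy')

/-- `⟨y·W⟩ = ⟨W⟩` if `|W| = n` is even, and `⟨y·W⟩ = y·⟨W⟩` if `n` is odd. -/
theorem continuant_twist {R : Type*} [CommRing R] (y : Rˣ) (w : ℕ → R) (n : ℕ) :
    (Even n → cont (List.map (twist y w) (List.range' 1 n))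
        = cont (List.map w (List.range' 1 n))) ∧
    (Odd n → cont (List.map (twist y w) (List.range' 1 n))
        = (y : R) * cont (List.map w (List.range' 1 n))) := by
  have h := aux_twist y w n 1
  constructor
  · intro hn; rw [h]; simp [hn]
  · intro hn; rw [h]; simp [Nat.not_even_iff_odd.2 hn]
end

section
/- Let p be an odd prime and r = p^t with t ≥ 1. Define F_n in 𝔽_p[T] by F_0 = 1, F_1 = T, F_{n+1} = T·F_n + F_{n-1}. Then F_{r-1} = (T² + 4)^{(r-1)/2} in 𝔽_p[T]. -/
open Polynomial in
/-- Let `p` be an odd prime and `r = p^t`, `t ≥ 1`. For the polynomial Fibonacci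
sequence over `𝔽_p` (`F₀ = 1`, `F₁ = T`, `F_{n+1} = T·Fₙ + F_{n-1}`), we have
`F_{r-1} = (T² + 4)^{(r-1)/2}` in `𝔽_p[T]`. -/
theorem polyFib_pow (p : ℕ) (hp : p.Prime) (hodd : Odd p) (t : ℕ) (ht : 1 ≤ t)
    (r : ℕ) (hr : r = p ^ t) (F : ℕ → Polynomial (ZMod p))
    (h0 : F 0 = 1) (h1 : F 1 = X)
    (hrec : ∀ n : ℕ, 1 ≤ n → F (n + 1) = X * F n + F (n - 1)) :
    F (r - 1) = (X ^ 2 + 4) ^ ((r - 1) / 2) := by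
  classical
  haveI : Fact p.Prime := ⟨hp⟩
  have hp2 : p ≠ 2 := by
    rintro rfl
    simp [Nat.odd_iff] at hodd
  have h2 : (2 : ZMod p) ≠ 0 := by
    intro h
    have h' : ((2 : ℕ) : ZMod p) = 0 := by exact_mod_cast h
    have := (CharP.cast_eq_zero_iff (ZMod p) p 2).mp h'
    have := (Nat.prime_dvd_prime_iff_eq hp Nat.prime_two).mp this
    exact hp2 this
  set K := ZMod p
  set c : K[X] := X ^ 2 + 4 with hc
  set f : Polynomial (K[X]) := X ^ 2 - C c with hf
  have hdeg : f.degree ≠ 0 := by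
    rw [hf, degree_X_pow_sub_C (by norm_num) c]
    norm_num
  set S := AdjoinRoot f with hS
  set of' : K[X] →+* S := AdjoinRoot.of f with hof
  have hinj : Function.Injective of' :=
    AdjoinRoot.of.injective_of_degree_ne_zero hdeg
  set y : S := AdjoinRoot.root f with hyy
  set x : S := of' X with hx
  have hy2 : y ^ 2 = x ^ 2 + 4 := by
    have h : (AdjoinRoot.mk f) (X ^ 2 - C c) = 0 := by
      rw [← hf]; exact AdjoinRoot.mk_self
    rw [map_sub, map_pow, AdjoinRoot.mk_X, AdjoinRoot.mk_C, sub_eq_zero] at h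
    rw [hyy, h, hc, map_add, map_pow, map_ofNat, ← hx]
  set e : S := of' (C (2⁻¹ : K)) with he'
  have he : (2 : S) * e = 1 := by
    have h21 : (2 : K) * 2⁻¹ = 1 := mul_inv_cancel₀ h2
    have : of' (C ((2 : K) * 2⁻¹)) = 1 := by rw [h21, C_1, map_one]
    rw [C_mul, map_mul] at this
    have hC2 : of' (C (2 : K)) = 2 := by
      rw [show (C (2 : K)) = (2 : K[X]) from map_ofNat C 2, map_ofNat]
    rwa [hC2] at this
  set α : S := e * (x + y) with hα'
  set β : S := e * (x - y) with hβ'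
  have hα : α ^ 2 = x * α + 1 := by
    rw [hα']
    linear_combination (e ^ 2) * hy2 + (e * x ^ 2 + e * x * y + 2 * e + 1) * he
  have hβ : β ^ 2 = x * β + 1 := by
    rw [hβ']
    linear_combination (e ^ 2) * hy2 + (e * x ^ 2 - e * x * y + 2 * e + 1) * he
  have hkey : ∀ n, y * of' (F n) = α ^ (n + 1) - β ^ (n + 1) := by
    intro n
    induction n using Nat.twoStepInduction with
    | zero =>
      rw [h0, map_one, mul_one]
      rw [hα', hβ']
      linear_combination (-y) * he
    | one =>
      rw [h1, ← hx]
      linear_combination (-1 : S) * hα + hβ + (-(x * y)) * he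
    | more n ih1 ih2 =>
      have hrw : F (n + 2) = X * F (n + 1) + F n := by
        have := hrec (n + 1) (by omega)
        simpa using this
      rw [hrw, map_add, map_mul, ← hx]
      linear_combination x * ih2 + ih1 + (-(α ^ (n + 1))) * hα + (β ^ (n + 1)) * hβ
  -- characteristic p
  have hginj : Function.Injective (of'.comp (C : K →+* K[X])) :=
    fun a b hab => C_injective (hinj hab)
  haveI : CharP S p := charP_of_injective_ringHom hginj p
  have hαβy : α - β = y := by
    rw [hα', hβ']
    linear_combination y * he
  have hro : Odd r := by rw [hr]; exact hodd.pow
  obtain ⟨k, hk'⟩ := hro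
  have hr1 : r - 1 + 1 = r := by omega
  have hkdiv : (r - 1) / 2 = k := by omega
  have hfrob : α ^ r - β ^ r = y ^ r := by
    rw [← hαβy, hr, sub_pow_char_pow]
  have hyr : y ^ r = y * of' (c ^ k) := by
    have : y ^ r = (y ^ 2) ^ k * y := by
      rw [hk']
      ring
    rw [this, hy2]
    have hcc : of' c = x ^ 2 + 4 := by rw [hc, map_add, map_pow, map_ofNat, hx]
    rw [map_pow, hcc]
    ring
  have hmain : y * of' (F (r - 1)) = y * of' (c ^ k) := by
    have h := hkey (r - 1)
    rw [hr1] at h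
    rw [h, hfrob, hyr]
  have hmul : of' (c * F (r - 1)) = of' (c * c ^ k) := by
    have h := congrArg (fun z => y * z) hmain
    have hy2' : y * (y * of' (F (r - 1))) = of' c * of' (F (r - 1)) := by
      have hcc : of' c = x ^ 2 + 4 := by rw [hc, map_add, map_pow, map_ofNat, hx]
      rw [hcc]; linear_combination (of' (F (r-1))) * hy2
    have hy2'' : y * (y * of' (c ^ k)) = of' c * of' (c ^ k) := by
      have hcc : of' c = x ^ 2 + 4 := by rw [hc, map_add, map_pow, map_ofNat, hx]
      rw [hcc]; linear_combination (of' (c ^ k)) * hy2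
    rw [hy2', hy2''] at h
    rw [map_mul, map_mul]
    exact h
  have hcF : c * F (r - 1) = c * c ^ k := hinj hmul
  have hcne : c ≠ 0 := by
    rw [hc, show (4 : K[X]) = C (4 : K) from (map_ofNat C 4).symm]
    exact X_pow_add_C_ne_zero (by norm_num) _
  have := mul_left_cancel₀ hcne hcF
  rw [hkdiv]
  exact this
end

section
/- Let p be a prime, r = p^t with t ≥ 1, and α = Σ_{n≥0} T^{-r^n} ∈ 𝔽_p((1/T)) (i.e., α = T^{-1} + T^{-r} + T^{-r²} + ...). Then α satisfies the algebraic equation α = T^{-1} + α^r over 𝔽_p(T), and α is irrational (not in 𝔽_p(T)). -/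
/-!
Over `𝔽_p` the Frobenius `f ↦ f ^ p` of a power series substitutes `X ^ p` for `X`, so
`α ^ r = Σ_{n≥1} X^{rⁿ} = α - X`. A rational function `f` with `f = X + f ^ r` cannot exist:
writing `d` for its degree at infinity, `f ^ r` has degree `r d`, which for `d ≤ 0` is
incompatible with `X = f - f ^ r` having degree `1`, and for `d > 0` exceeds the degree
`d` of `f - X`.
-/

open scoped Classical

theorem PowerSeries.pow_prime_pow_eq_expand {p : ℕ} [hp : Fact p.Prime] (n : ℕ)
    (f : PowerSeries (ZMod p)) : f ^ p ^ n = expand (p ^ n) (pow_ne_zero n hp.out.ne_zero) f := by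
  have hid : iterateFrobenius (ZMod p) p n = RingHom.id _ :=
    RingHom.ext fun x => by rw [iterateFrobenius_def, ZMod.pow_card_pow, RingHom.id_apply]
  rw [← MvPowerSeries.map_iterateFrobenius_expand p hp.out.ne_zero, hid, MvPowerSeries.map_id]
  rfl

theorem Nat.exists_eq_pow_iff {r m : ℕ} (hr : 0 < r) :
    (∃ n, m = r ^ n) ↔ m = 1 ∨ r ∣ m ∧ ∃ n, m / r = r ^ n := by
  constructor
  · rintro ⟨_ | n, rfl⟩
    · exact .inl (pow_zero r)
    · exact .inr ⟨dvd_pow_self r n.succ_ne_zero, n, by rw [pow_succ, Nat.mul_div_cancel _ hr]⟩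
  · rintro (rfl | ⟨hdvd, n, hn⟩)
    · exact ⟨0, (pow_zero r).symm⟩
    · exact ⟨n + 1, by rw [pow_succ', ← hn, Nat.mul_div_cancel' hdvd]⟩

theorem PowerSeries.mk_indicator_pow_eq_X_add_expand (R : Type*) [CommRing R] {r : ℕ}
    (hr : 2 ≤ r) :
    (mk fun m => if ∃ n, m = r ^ n then 1 else 0 : PowerSeries R) =
      X + expand r (by omega) (mk fun m => if ∃ n, m = r ^ n then 1 else 0) := by
  ext m
  have hpow := Nat.exists_eq_pow_iff (m := m) (by omega : 0 < r)
  have hr1 : ¬ r ∣ 1 := fun h => by have := Nat.le_of_dvd one_pos h; omega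
  simp only [map_add, coeff_expand, coeff_X, coeff_mk]
  split_ifs <;> simp_all

theorem RatFunc.intDegree_pow {K : Type*} [Field K] {f : RatFunc K} (hf : f ≠ 0) (n : ℕ) :
    (f ^ n).intDegree = n * f.intDegree := by
  induction n with
  | zero => simp
  | succ n ih =>
    rw [pow_succ, intDegree_mul (pow_ne_zero n hf) hf, ih]
    push_cast
    ring

theorem RatFunc.X_add_pow_ne_self {K : Type*} [Field K] {r : ℕ} (hr : 2 ≤ r) (f : RatFunc K) :
    X + f ^ r ≠ f := by
  intro hf
  have hf0 : f ≠ 0 := by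
    rintro rfl
    exact X_ne_zero (by simpa [zero_pow (by omega : r ≠ 0)] using hf)
  have hfr0 : f ^ r ≠ 0 := pow_ne_zero r hf0
  have hdeg : (f ^ r).intDegree = r * f.intDegree := intDegree_pow hf0 r
  rcases le_or_gt f.intDegree 0 with hd | hd
  · have hX : X = f + -(f ^ r) := by linear_combination hf
    have hle := intDegree_add_le (neg_ne_zero.mpr hfr0) (hX ▸ X_ne_zero)
    rw [← hX, intDegree_X, intDegree_neg, hdeg] at hle
    have : (r : ℤ) * f.intDegree ≤ 0 := mul_nonpos_of_nonneg_of_nonpos (by positivity) hd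
    omega
  · have hX : f ^ r = f + -X := by linear_combination hf
    have hle := intDegree_add_le (neg_ne_zero.mpr X_ne_zero) (hX ▸ hfr0)
    rw [← hX, intDegree_neg, intDegree_X, hdeg] at hle
    have : 2 * f.intDegree ≤ r * f.intDegree :=
      mul_le_mul_of_nonneg_right (by exact_mod_cast hr) hd.le
    omega

/-- Let `p` be a prime, `r = p^t` with `t ≥ 1`, and
`α = Σ_{n≥0} T^{-rⁿ} ∈ 𝔽_p((1/T))` (modelled as Laurent series in `X = 1/T`,
so `α = Σ_{n≥0} X^{rⁿ}`, the power series whose coefficient at `m` is 1 iff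
`m` is a power `rⁿ`). Then `α = T⁻¹ + α^r` and `α` is irrational, i.e. not
the expansion of any rational function. -/
theorem mahler_example (p : ℕ) [hp : Fact p.Prime] (t : ℕ) (ht : 1 ≤ t)
    (r : ℕ) (hr : r = p ^ t)
    (α : LaurentSeries (ZMod p))
    (hα : α = ((PowerSeries.mk fun m =>
      if ∃ n : ℕ, m = r ^ n then (1 : ZMod p) else 0) : PowerSeries (ZMod p))) :
    α = ((PowerSeries.X : PowerSeries (ZMod p)) : LaurentSeries (ZMod p)) + α ^ r ∧
    ∀ f : RatFunc (ZMod p), (f : LaurentSeries (ZMod p)) ≠ α := by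
  subst hr
  have hr2 : 2 ≤ p ^ t := hp.out.two_le.trans (Nat.le_self_pow (by omega) p)
  have hβ := PowerSeries.mk_indicator_pow_eq_X_add_expand (ZMod p) hr2
  rw [← PowerSeries.pow_prime_pow_eq_expand] at hβ
  have hαeq : α = (PowerSeries.X : PowerSeries (ZMod p)) + α ^ p ^ t := by
    rw [hα]
    nth_rewrite 1 [hβ]
    rw [map_add, map_pow]
  have hcoe : Function.Injective ((↑) : RatFunc (ZMod p) → LaurentSeries (ZMod p)) :=
    RingHom.injective _
  refine ⟨hαeq, fun f hf => RatFunc.X_add_pow_ne_self hr2 f (hcoe ?_)⟩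
  rw [map_add, map_pow, RatFunc.coe_X, ← PowerSeries.coe_X, hf, ← hαeq]
end

section
/- Let p be a prime, r = p^t with t ≥ 1, and α = Σ_{n≥0} T^{-r^n} ∈ 𝔽_p((1/T)). For n ≥ 1 set V_n = T^{r^{n-1}} and U_n = V_n·(T^{-1} + T^{-r} + ... + T^{-r^{n-1}}). Then |α − U_n/V_n| = |V_n|^{-r}, where |·| is the ultrametric absolute value with |T| > 1. -/
open scoped Classical

/-- The ultrametric absolute value on `𝔽_p((1/T))` (modelled as Laurent series
in `X = 1/T`): `|x| = c^(−order x)` for `x ≠ 0`, where `c = |T| > 1`, and `|0| = 0`. -/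
noncomputable def absL {F : Type*} [Field F] (c : ℝ) (x : LaurentSeries F) : ℝ :=
  if x = 0 then 0 else c ^ (-x.order)

/-!
In the variable `X = 1/T`, `α` is the power series whose coefficients are the indicator of
`{rᵏ}`, and `Uₙ/Vₙ` is its truncation `∑_{k<n} X^{rᵏ}`. Since `k ↦ rᵏ` is injective (`r ≥ 2`), the
difference is the indicator series of `{rᵏ : k ≥ n}`, of order `rⁿ`, while `Vₙ` has order
`-r^{n-1}`; so both sides equal `c^{-rⁿ}`.
-/

namespace PowerSeries

variable {R : Type*}

theorem sum_X_pow_eq_mk_indicator [Semiring R] (s : Finset ℕ) :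
    ∑ i ∈ s, (X : PowerSeries R) ^ i = mk ((s : Set ℕ).indicator 1) := by
  ext m
  simp [coeff_X_pow, Set.indicator_apply]

theorem mk_indicator_range_sub_sum [Ring R] {f : ℕ → ℕ} (hf : Function.Injective f) (n : ℕ) :
    mk ((Set.range f).indicator 1) - ∑ k ∈ Finset.range n, (X : PowerSeries R) ^ f k =
      mk ((f '' Set.Ici n).indicator 1) := by
  rw [← Finset.sum_image hf.injOn, sum_X_pow_eq_mk_indicator, Finset.coe_image, Finset.coe_range,
    ← Set.compl_Iio, Set.image_compl_eq_range_sdiff_image hf,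
    Set.indicator_sdiff (Set.image_subset_range _ _)]
  rfl

theorem order_mk_indicator [Semiring R] [Nontrivial R] {s : Set ℕ} {m : ℕ} (h : IsLeast s m) :
    (mk (s.indicator 1) : PowerSeries R).order = m :=
  order_eq_nat.2 ⟨by simp [h.1], fun i hi => by
    simp [Set.indicator_of_notMem fun hs => (h.2 hs).not_gt hi]⟩

end PowerSeries

namespace LaurentSeries

theorem order_coe_of_order_eq {R : Type*} [Semiring R] {f : PowerSeries R} {n : ℕ}
    (h : f.order = n) : (f : LaurentSeries R).order = n := by
  obtain ⟨hn, hlt⟩ := PowerSeries.order_eq_nat.1 h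
  have hcoeff : (f : LaurentSeries R).coeff n ≠ 0 := by
    rwa [coeff_coe_powerSeries]
  refine le_antisymm (HahnSeries.order_le_of_coeff_ne_zero hcoeff) ?_
  refine (HahnSeries.le_order_iff_forall (HahnSeries.ne_zero_of_coeff_ne_zero hcoeff)).2
    fun j hj => ?_
  rw [PowerSeries.coeff_coe]
  split_ifs with hj0
  · rfl
  · exact hlt _ (by omega)

theorem inv_X_pow {F : Type*} [Field F] (N : ℕ) :
    ((PowerSeries.X : PowerSeries F) : LaurentSeries F)⁻¹ ^ N =
      HahnSeries.single (-(N : ℤ)) 1 := by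
  rw [HahnSeries.ofPowerSeries_X, HahnSeries.inv_single, HahnSeries.single_pow, inv_one, one_pow,
    smul_neg, nsmul_one]

end LaurentSeries

section absL

variable {F : Type*} [Field F] (c : ℝ)

theorem absL_of_ne_zero {x : LaurentSeries F} (hx : x ≠ 0) : absL c x = c ^ (-x.order) :=
  if_neg hx

theorem absL_single (N : ℤ) {a : F} (ha : a ≠ 0) : absL c (HahnSeries.single N a) = c ^ (-N) := by
  rw [absL_of_ne_zero c (HahnSeries.single_ne_zero ha), HahnSeries.order_single ha]

theorem absL_coe_of_order_eq {f : PowerSeries F} {n : ℕ} (h : f.order = n) :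
    absL c (f : LaurentSeries F) = c ^ (-(n : ℤ)) := by
  have hf : (f : LaurentSeries F) ≠ 0 := by
    rw [map_ne_zero_iff _ HahnSeries.ofPowerSeries_injective]
    rintro rfl
    simp at h
  rw [absL_of_ne_zero c hf, LaurentSeries.order_coe_of_order_eq h]

end absL

theorem mahler_approx_general (p : ℕ) [hp : Fact p.Prime] (t : ℕ) (ht : 1 ≤ t)
    (r : ℕ) (hr : r = p ^ t) (c : ℝ)
    (α : LaurentSeries (ZMod p))
    (hα : α = ((PowerSeries.mk fun m =>
      if ∃ n : ℕ, m = r ^ n then (1 : ZMod p) else 0) : PowerSeries (ZMod p)))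
    (n : ℕ) (hn : 1 ≤ n)
    (X V U : LaurentSeries (ZMod p))
    (hX : X = ((PowerSeries.X : PowerSeries (ZMod p)) : LaurentSeries (ZMod p)))
    (hV : V = (X⁻¹) ^ r ^ (n - 1))
    (hU : U = V * ∑ k ∈ Finset.range n, X ^ r ^ k) :
    absL c (α - U / V) = (absL c V) ^ (-(r : ℤ)) := by
  have hr_one : 1 < r := hr ▸ hp.out.one_lt.trans_le (Nat.le_self_pow (by omega) p)
  have hmono : StrictMono (r ^ · : ℕ → ℕ) := pow_right_strictMono₀ hr_one
  have hV_single : V = HahnSeries.single (-(r ^ (n - 1) : ℕ) : ℤ) 1 := by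
    rw [hV, hX, LaurentSeries.inv_X_pow]
  have hα_indicator :
      α = (PowerSeries.mk ((Set.range (r ^ ·)).indicator 1) : PowerSeries (ZMod p)) := by
    rw [hα]
    congr
    ext m
    simp [Set.indicator_apply, eq_comm]
  have hdiff : α - U / V =
      (PowerSeries.mk (((r ^ ·) '' Set.Ici n).indicator 1) : PowerSeries (ZMod p)) := by
    rw [hU, mul_div_cancel_left₀ _ (hV_single ▸ HahnSeries.single_ne_zero one_ne_zero),
      hα_indicator, hX, ← PowerSeries.mk_indicator_range_sub_sum hmono.injective]
    simp only [map_sub, map_sum, map_pow]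
  have hord : (PowerSeries.mk (((r ^ ·) '' Set.Ici n).indicator 1) : PowerSeries (ZMod p)).order =
      (r ^ n : ℕ) :=
    PowerSeries.order_mk_indicator (hmono.map_isLeast.2 isLeast_Ici)
  rw [hdiff, absL_coe_of_order_eq c hord, hV_single, absL_single c _ one_ne_zero, neg_neg,
    ← zpow_mul]
  push_cast
  rw [mul_neg, ← pow_succ, Nat.sub_add_cancel hn]

/-- For Mahler's example `α = Σ_{n≥0} T^{-rⁿ}`, with `Vₙ = T^{r^{n-1}}` and
`Uₙ = Vₙ·(T⁻¹ + T^{-r} + ⋯ + T^{-r^{n-1}})`, we have `|α − Uₙ/Vₙ| = |Vₙ|^{-r}`. -/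
theorem mahler_approx (p : ℕ) [hp : Fact p.Prime] (t : ℕ) (ht : 1 ≤ t)
    (r : ℕ) (hr : r = p ^ t) (c : ℝ) (hc : 1 < c)
    (α : LaurentSeries (ZMod p))
    (hα : α = ((PowerSeries.mk fun m =>
      if ∃ n : ℕ, m = r ^ n then (1 : ZMod p) else 0) : PowerSeries (ZMod p)))
    (n : ℕ) (hn : 1 ≤ n)
    (X V U : LaurentSeries (ZMod p))
    (hX : X = ((PowerSeries.X : PowerSeries (ZMod p)) : LaurentSeries (ZMod p)))
    (hV : V = (X⁻¹) ^ r ^ (n - 1))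
    (hU : U = V * ∑ k ∈ Finset.range n, X ^ r ^ k) :
    absL c (α - U / V) = (absL c V) ^ (-(r : ℤ)) :=
  mahler_approx_general p (hp := hp) t ht r hr c α hα n hn X V U hX hV hU
end

section
/- In 𝔽_3((1/T)), let β = [T, T³, T⁹, ..., T^{3^n}, ...] be the continued fraction satisfying β = T + 1/β³. Then β satisfies β⁸ − T²β⁶ + β⁴ + 1 = 0; equivalently, γ = 1/β² satisfies γ⁴ + γ² − T²γ + 1 = 0. -/
/-- Squaring `β⁴ = Tβ³ + 1` and eliminating `Tβ³` gives `β⁸ = T²β⁶ + 2β⁴ - 1`, and `2 = -1`. -/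
theorem octic_of_pow_four_eq {R : Type*} [CommRing R] [CharP R 3] {T β : R}
    (h : β ^ 4 = T * β ^ 3 + 1) : β ^ 8 - T ^ 2 * β ^ 6 + β ^ 4 + 1 = 0 := by
  have h3 : (3 : R) = 0 := CharP.cast_eq_zero R 3
  linear_combination (β ^ 4 + T * β ^ 3 + 2) * h + (T * β ^ 3 + 1) * h3

section Field

variable {K : Type*} [Field K] {T β : K}

theorem pow_four_eq_of_eq_add_one_div_pow_three (hβ0 : β ≠ 0) (hβ : β = T + 1 / β ^ 3) :
    β ^ 4 = T * β ^ 3 + 1 := by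
  field_simp at hβ
  linear_combination hβ

theorem quartic_one_div_sq_of_octic (hβ0 : β ≠ 0)
    (h : β ^ 8 - T ^ 2 * β ^ 6 + β ^ 4 + 1 = 0) :
    (1 / β ^ 2) ^ 4 + (1 / β ^ 2) ^ 2 - T ^ 2 * (1 / β ^ 2) + 1 = 0 := by
  field_simp
  linear_combination h

end Field

theorem beta_octic_general (T β : LaurentSeries (ZMod 3))
    (hβ0 : β ≠ 0)
    (hβ : β = T + 1 / β ^ 3) :
    β ^ 8 - T ^ 2 * β ^ 6 + β ^ 4 + 1 = 0 ∧
    (1 / β ^ 2) ^ 4 + (1 / β ^ 2) ^ 2 - T ^ 2 * (1 / β ^ 2) + 1 = 0 := by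
  have : CharP (LaurentSeries (ZMod 3)) 3 :=
    charP_of_injective_algebraMap (algebraMap (ZMod 3) _).injective 3
  have octic := octic_of_pow_four_eq (pow_four_eq_of_eq_add_one_div_pow_three hβ0 hβ)
  exact ⟨octic, quartic_one_div_sq_of_octic hβ0 octic⟩

/-- In `𝔽₃((1/T))` (modelled as Laurent series in `X = 1/T`, so `T = X⁻¹`),
let `β = [T, T³, T⁹, ...]` be the element with `|β| = |T|` satisfying
`β = T + 1/β³`.  Then `β⁸ − T²β⁶ + β⁴ + 1 = 0`, and equivalently `γ = 1/β²`
satisfies `γ⁴ + γ² − T²γ + 1 = 0` (the Mills–Robbins quartic in `T²`). -/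
theorem beta_octic (T β : LaurentSeries (ZMod 3))
    (hT : T = ((PowerSeries.X : PowerSeries (ZMod 3)) : LaurentSeries (ZMod 3))⁻¹)
    (hβ0 : β ≠ 0) (hord : β.order = T.order)
    (hβ : β = T + 1 / β ^ 3) :
    β ^ 8 - T ^ 2 * β ^ 6 + β ^ 4 + 1 = 0 ∧
    (1 / β ^ 2) ^ 4 + (1 / β ^ 2) ^ 2 - T ^ 2 * (1 / β ^ 2) + 1 = 0 :=
  beta_octic_general T β hβ0 hβ
end
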